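/- arXiv:2310.04309 — 3 statements merged into one kernel-verified Lean document; each statement's English description precedes it below -/
import Mathlib

section
/- Let A*, B*, C*, D*, E*, F* be graded abelian groups arranged in a commutative braid with four long exact sequences ①, ②, ③, ④ (as in Eilenberg–Steenrod / Wall's braid lemma). Then the sequence ... → Eⁿ →(③,④) Bⁿ ⊕ Dⁿ →(①−②) Fⁿ →(③∘②) Eⁿ⁺¹ → ... is exact at Eⁿ. -/
/-- Wall's braid lemma, exactness of the derived sequence at Eⁿ. -/
theorem braid_derived_sequence_exact_at_E
    -- six graded abelian groups
    (A B C D E F : ℤ → Type)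
    [∀ n, AddCommGroup (A n)] [∀ n, AddCommGroup (B n)] [∀ n, AddCommGroup (C n)]
    [∀ n, AddCommGroup (D n)] [∀ n, AddCommGroup (E n)] [∀ n, AddCommGroup (F n)]
    -- the braid maps of the four sequences ①, ②, ③, ④
    (AB : ∀ n, A n →+ B n) (BF : ∀ n, B n →+ F n) (FA : ∀ n, F n →+ A (n + 1))
    (DF : ∀ n, D n →+ F n) (FC : ∀ n, F n →+ C n) (CD : ∀ n, C n →+ D (n + 1))
    (EB : ∀ n, E n →+ B n) (BC : ∀ n, B n →+ C n) (CE : ∀ n, C n →+ E (n + 1))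
    (AE : ∀ n, A n →+ E n) (ED : ∀ n, E n →+ D n) (DA : ∀ n, D n →+ A (n + 1))
    -- exactness of the sequence ①: ⋯ → Aⁿ → Bⁿ → Fⁿ → Aⁿ⁺¹ → ⋯
    (h1B : ∀ n, Set.range (AB n) = {x | BF n x = 0})
    (h1F : ∀ n, Set.range (BF n) = {x | FA n x = 0})
    (h1A : ∀ n, Set.range (FA n) = {x | AB (n + 1) x = 0})
    -- exactness of the sequence ②: ⋯ → Dⁿ → Fⁿ → Cⁿ → Dⁿ⁺¹ → ⋯
    (h2F : ∀ n, Set.range (DF n) = {x | FC n x = 0})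
    (h2C : ∀ n, Set.range (FC n) = {x | CD n x = 0})
    (h2D : ∀ n, Set.range (CD n) = {x | DF (n + 1) x = 0})
    -- exactness of the sequence ③: ⋯ → Eⁿ → Bⁿ → Cⁿ → Eⁿ⁺¹ → ⋯
    (h3B : ∀ n, Set.range (EB n) = {x | BC n x = 0})
    (h3C : ∀ n, Set.range (BC n) = {x | CE n x = 0})
    (h3E : ∀ n, Set.range (CE n) = {x | EB (n + 1) x = 0})
    -- exactness of the sequence ④: ⋯ → Aⁿ → Eⁿ → Dⁿ → Aⁿ⁺¹ → ⋯
    (h4E : ∀ n, Set.range (AE n) = {x | ED n x = 0})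
    (h4D : ∀ n, Set.range (ED n) = {x | DA n x = 0})
    (h4A : ∀ n, Set.range (DA n) = {x | AE (n + 1) x = 0})
    -- commutativity of the triangles and diamonds of the braid
    (c1 : ∀ n (x : A n), EB n (AE n x) = AB n x)
    (c2 : ∀ n (x : B n), FC n (BF n x) = BC n x)
    (c3 : ∀ n (x : D n), FA n (DF n x) = DA n x)
    (c4 : ∀ n (x : C n), ED (n + 1) (CE n x) = CD n x)
    (c5 : ∀ n (x : E n), BF n (EB n x) = DF n (ED n x))
    (c6 : ∀ n (x : F n), CE n (FC n x) = AE (n + 1) (FA n x)) :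
    ∀ n, Set.range (fun x : F n => CE n (FC n x)) =
      {e : E (n + 1) | EB (n + 1) e = 0 ∧ ED (n + 1) e = 0} := by
  intro n
  ext e
  constructor
  · rintro ⟨x, rfl⟩
    constructor
    · have : CE n (FC n x) ∈ Set.range (CE n) := ⟨FC n x, rfl⟩
      rw [h3E n] at this
      exact this
    · rw [c4]
      have : FC n x ∈ Set.range (FC n) := ⟨x, rfl⟩
      rw [h2C n] at this
      exact this
  · rintro ⟨hEB, hED⟩
    have he : e ∈ {x | EB (n + 1) x = 0} := hEB
    rw [← h3E n] at he
    obtain ⟨c, rfl⟩ := he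
    have hc : c ∈ {x | CD n x = 0} := by
      show CD n c = 0
      rw [← c4]
      exact hED
    rw [← h2C n] at hc
    obtain ⟨f, rfl⟩ := hc
    exact ⟨f, rfl⟩
end

section
/- Let A*, B*, C*, D*, E*, F* form a commutative exact braid of graded abelian groups. Then the derived sequence ... → Eⁿ →(③,④) Bⁿ ⊕ Dⁿ →(①−②) Fⁿ →(③∘②) Eⁿ⁺¹ → ... is exact at Bⁿ ⊕ Dⁿ, i.e., the kernel of the difference map (b,d) ↦ ①(b) − ②(d) equals the image of the pair map e ↦ (③(e), ④(e)). -/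
/-- Wall's braid lemma, exactness of the derived sequence at Bⁿ ⊕ Dⁿ. -/
theorem braid_derived_sequence_exact_at_B_oplus_D
    -- six graded abelian groups
    (A B C D E F : ℤ → Type)
    [∀ n, AddCommGroup (A n)] [∀ n, AddCommGroup (B n)] [∀ n, AddCommGroup (C n)]
    [∀ n, AddCommGroup (D n)] [∀ n, AddCommGroup (E n)] [∀ n, AddCommGroup (F n)]
    -- the braid maps of the four sequences ①, ②, ③, ④
    (AB : ∀ n, A n →+ B n) (BF : ∀ n, B n →+ F n) (FA : ∀ n, F n →+ A (n + 1))
    (DF : ∀ n, D n →+ F n) (FC : ∀ n, F n →+ C n) (CD : ∀ n, C n →+ D (n + 1))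
    (EB : ∀ n, E n →+ B n) (BC : ∀ n, B n →+ C n) (CE : ∀ n, C n →+ E (n + 1))
    (AE : ∀ n, A n →+ E n) (ED : ∀ n, E n →+ D n) (DA : ∀ n, D n →+ A (n + 1))
    -- exactness of the sequence ①: ⋯ → Aⁿ → Bⁿ → Fⁿ → Aⁿ⁺¹ → ⋯
    (h1B : ∀ n, Set.range (AB n) = {x | BF n x = 0})
    (h1F : ∀ n, Set.range (BF n) = {x | FA n x = 0})
    (h1A : ∀ n, Set.range (FA n) = {x | AB (n + 1) x = 0})
    -- exactness of the sequence ②: ⋯ → Dⁿ → Fⁿ → Cⁿ → Dⁿ⁺¹ → ⋯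
    (h2F : ∀ n, Set.range (DF n) = {x | FC n x = 0})
    (h2C : ∀ n, Set.range (FC n) = {x | CD n x = 0})
    (h2D : ∀ n, Set.range (CD n) = {x | DF (n + 1) x = 0})
    -- exactness of the sequence ③: ⋯ → Eⁿ → Bⁿ → Cⁿ → Eⁿ⁺¹ → ⋯
    (h3B : ∀ n, Set.range (EB n) = {x | BC n x = 0})
    (h3C : ∀ n, Set.range (BC n) = {x | CE n x = 0})
    (h3E : ∀ n, Set.range (CE n) = {x | EB (n + 1) x = 0})
    -- exactness of the sequence ④: ⋯ → Aⁿ → Eⁿ → Dⁿ → Aⁿ⁺¹ → ⋯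
    (h4E : ∀ n, Set.range (AE n) = {x | ED n x = 0})
    (h4D : ∀ n, Set.range (ED n) = {x | DA n x = 0})
    (h4A : ∀ n, Set.range (DA n) = {x | AE (n + 1) x = 0})
    -- commutativity of the triangles and diamonds of the braid
    (c1 : ∀ n (x : A n), EB n (AE n x) = AB n x)
    (c2 : ∀ n (x : B n), FC n (BF n x) = BC n x)
    (c3 : ∀ n (x : D n), FA n (DF n x) = DA n x)
    (c4 : ∀ n (x : C n), ED (n + 1) (CE n x) = CD n x)
    (c5 : ∀ n (x : E n), BF n (EB n x) = DF n (ED n x))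
    (c6 : ∀ n (x : F n), CE n (FC n x) = AE (n + 1) (FA n x)) :
    ∀ n, {p : B n × D n | BF n p.1 - DF n p.2 = 0} =
      Set.range (fun e : E n => (EB n e, ED n e)) := by
  intro n
  obtain ⟨m, rfl⟩ : ∃ m, n = m + 1 := ⟨n - 1, by ring⟩
  ext ⟨b, d⟩
  simp only [Set.mem_setOf_eq, Set.mem_range, sub_eq_zero]
  constructor
  · intro hbd
    -- BC b = 0, so b comes from E
    have hBCb : BC (m + 1) b = 0 := by
      rw [← c2, hbd]
      have : DF (m + 1) d ∈ Set.range (DF (m + 1)) := ⟨d, rfl⟩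
      rw [h2F] at this
      exact this
    have hb : b ∈ Set.range (EB (m + 1)) := by rw [h3B]; exact hBCb
    obtain ⟨e0, he0⟩ := hb
    -- DF (d - ED e0) = 0
    have hdf : DF (m + 1) (d - ED (m + 1) e0) = 0 := by
      rw [map_sub, ← c5, he0, hbd, sub_self]
    have hd : d - ED (m + 1) e0 ∈ Set.range (CD m) := by
      rw [h2D]; exact hdf
    obtain ⟨c, hc⟩ := hd
    refine ⟨e0 + CE m c, ?_⟩
    have hEBc : EB (m + 1) (CE m c) = 0 := by
      have : CE m c ∈ Set.range (CE m) := ⟨c, rfl⟩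
      rw [h3E] at this
      exact this
    have hEDc : ED (m + 1) (CE m c) = d - ED (m + 1) e0 := by
      rw [c4, hc]
    simp [map_add, hEBc, hEDc, he0]
  · rintro ⟨e, he⟩
    have h1 : b = EB (m + 1) e := congrArg Prod.fst he.symm
    have h2 : d = ED (m + 1) e := congrArg Prod.snd he.symm
    rw [h1, h2, c5]
end

section
/- Let A*, B*, C*, D*, E*, F* form a commutative exact braid of graded abelian groups. Then the derived sequence is exact at Fⁿ: the kernel of the composite map Fⁿ → Eⁿ⁺¹ equals the image of the difference map Bⁿ ⊕ Dⁿ → Fⁿ. -/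
/-- Wall's braid lemma, exactness of the derived sequence at Fⁿ. -/
theorem braid_derived_sequence_exact_at_F
    -- six graded abelian groups
    (A B C D E F : ℤ → Type)
    [∀ n, AddCommGroup (A n)] [∀ n, AddCommGroup (B n)] [∀ n, AddCommGroup (C n)]
    [∀ n, AddCommGroup (D n)] [∀ n, AddCommGroup (E n)] [∀ n, AddCommGroup (F n)]
    -- the braid maps of the four sequences ①, ②, ③, ④
    (AB : ∀ n, A n →+ B n) (BF : ∀ n, B n →+ F n) (FA : ∀ n, F n →+ A (n + 1))
    (DF : ∀ n, D n →+ F n) (FC : ∀ n, F n →+ C n) (CD : ∀ n, C n →+ D (n + 1))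
    (EB : ∀ n, E n →+ B n) (BC : ∀ n, B n →+ C n) (CE : ∀ n, C n →+ E (n + 1))
    (AE : ∀ n, A n →+ E n) (ED : ∀ n, E n →+ D n) (DA : ∀ n, D n →+ A (n + 1))
    -- exactness of the sequence ①: ⋯ → Aⁿ → Bⁿ → Fⁿ → Aⁿ⁺¹ → ⋯
    (h1B : ∀ n, Set.range (AB n) = {x | BF n x = 0})
    (h1F : ∀ n, Set.range (BF n) = {x | FA n x = 0})
    (h1A : ∀ n, Set.range (FA n) = {x | AB (n + 1) x = 0})
    -- exactness of the sequence ②: ⋯ → Dⁿ → Fⁿ → Cⁿ → Dⁿ⁺¹ → ⋯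
    (h2F : ∀ n, Set.range (DF n) = {x | FC n x = 0})
    (h2C : ∀ n, Set.range (FC n) = {x | CD n x = 0})
    (h2D : ∀ n, Set.range (CD n) = {x | DF (n + 1) x = 0})
    -- exactness of the sequence ③: ⋯ → Eⁿ → Bⁿ → Cⁿ → Eⁿ⁺¹ → ⋯
    (h3B : ∀ n, Set.range (EB n) = {x | BC n x = 0})
    (h3C : ∀ n, Set.range (BC n) = {x | CE n x = 0})
    (h3E : ∀ n, Set.range (CE n) = {x | EB (n + 1) x = 0})
    -- exactness of the sequence ④: ⋯ → Aⁿ → Eⁿ → Dⁿ → Aⁿ⁺¹ → ⋯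
    (h4E : ∀ n, Set.range (AE n) = {x | ED n x = 0})
    (h4D : ∀ n, Set.range (ED n) = {x | DA n x = 0})
    (h4A : ∀ n, Set.range (DA n) = {x | AE (n + 1) x = 0})
    -- commutativity of the triangles and diamonds of the braid
    (c1 : ∀ n (x : A n), EB n (AE n x) = AB n x)
    (c2 : ∀ n (x : B n), FC n (BF n x) = BC n x)
    (c3 : ∀ n (x : D n), FA n (DF n x) = DA n x)
    (c4 : ∀ n (x : C n), ED (n + 1) (CE n x) = CD n x)
    (c5 : ∀ n (x : E n), BF n (EB n x) = DF n (ED n x))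
    (c6 : ∀ n (x : F n), CE n (FC n x) = AE (n + 1) (FA n x)) :
    ∀ n, Set.range (fun p : B n × D n => BF n p.1 - DF n p.2) =
      {x : F n | CE n (FC n x) = 0} := by
  intro n
  ext x
  constructor
  · rintro ⟨⟨b, d⟩, rfl⟩
    have hd : FC n (DF n d) = 0 := by
      have : DF n d ∈ Set.range (DF n) := ⟨d, rfl⟩
      rw [h2F n] at this; exact this
    have hb : CE n (BC n b) = 0 := by
      have : BC n b ∈ Set.range (BC n) := ⟨b, rfl⟩
      rw [h3C n] at this; exact this
    simp only [Set.mem_setOf_eq, map_sub, hd, sub_zero, c2, hb]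
  · intro hx
    have : FC n x ∈ Set.range (BC n) := by rw [h3C n]; exact hx
    obtain ⟨b, hb⟩ := this
    have h0 : FC n (x - BF n b) = 0 := by
      rw [map_sub, c2, hb, sub_self]
    have : x - BF n b ∈ Set.range (DF n) := by rw [h2F n]; exact h0
    obtain ⟨d, hd⟩ := this
    exact ⟨(b, -d), by simp [map_neg, hd]⟩
end
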